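/- Let W* ∈ ℝ^{d×q}, X ∈ ℝ^{q×m} with X having the property that every m×m submatrix formed by choosing m rows of X is invertible, and let Ŵ be any fixed assignment of weights. If an allocation of learnable entries of W ∈ ℝ^{d×q} assigns exactly m learnable entries to every row of W, then there exists W agreeing with Ŵ on all non-learnable entries such that WX = W*X. -/

import Mathlib

/-!
Each row of `W X = W* X` is a separate linear system `w ᵥ* X = w* ᵥ* X` in the `m` learnable
entries of that row, whose coefficient matrix is the `m × m` submatrix of `X` formed by the
corresponding rows. That submatrix is invertible, so the fixed entries can be compensated exactly.
-/

open Function Matrix Finset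

namespace Matrix

theorem extend_zero_vecMul {R ι n o : Type*} [NonUnitalNonAssocSemiring R] [Fintype ι] [Fintype n]
    {s : n → ι} (hs : Injective s) (u : n → R) (X : Matrix ι o R) :
    extend s u 0 ᵥ* X = u ᵥ* X.submatrix s id := by
  ext k
  refine (Fintype.sum_of_injective s hs _ _ (fun j hj => ?_) fun t => ?_).symm
  · simp [extend_apply' _ _ _ hj]
  · simp [hs.extend_apply]

theorem exists_vecMul_eq_of_isUnit_submatrix {R ι n : Type*} [CommRing R] [Fintype ι]
    [Fintype n] [DecidableEq n] {X : Matrix ι n R} {s : n → ι} (hs : Injective s)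
    (hX : IsUnit (X.submatrix s id)) (w : ι → R) (y : n → R) :
    ∃ v : ι → R, (∀ j ∉ Set.range s, v j = w j) ∧ v ᵥ* X = y := by
  obtain ⟨u, hu : u ᵥ* X.submatrix s id = y - w ᵥ* X⟩ :=
    vecMul_surjective_iff_isUnit.2 hX (y - w ᵥ* X)
  refine ⟨w + extend s u 0, fun j hj => by simp [extend_apply' _ _ _ hj], ?_⟩
  rw [add_vecMul, extend_zero_vecMul hs, hu, add_sub_cancel]

end Matrix

theorem Finset.card_filter_prodMk_mem {α β : Type*} [DecidableEq α] [DecidableEq β] [Fintype β]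
    (A : Finset (α × β)) (a : α) :
    #{b | (a, b) ∈ A} = #(A.filter fun p => p.1 = a) := by
  rw [← card_map (Embedding.sectR a β)]
  congr 1
  ext ⟨a', b⟩
  simp only [mem_map, mem_filter, mem_univ, true_and, Embedding.sectR_apply, Prod.mk.injEq]
  grind

/-- Linear estimator, maximal allocation: if every m×m submatrix of X (obtained by
choosing m rows) is invertible and the allocation assigns exactly m learnable entries
to every row of W, then the student can match the teacher: there exists W agreeing
with the fixed weights Ŵ off the allocation with W X = W* X. -/
theorem linear_estimator_maximal {d q m : ℕ}
    (Wstar : Matrix (Fin d) (Fin q) ℝ) (X : Matrix (Fin q) (Fin m) ℝ)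
    (hX : ∀ s : Fin m → Fin q, Function.Injective s → IsUnit (X.submatrix s id))
    (What : Matrix (Fin d) (Fin q) ℝ)
    (A : Finset (Fin d × Fin q))
    (hA : ∀ i : Fin d, (A.filter (fun p => p.1 = i)).card = m) :
    ∃ W : Matrix (Fin d) (Fin q) ℝ,
      (∀ i j, (i, j) ∉ A → W i j = What i j) ∧ W * X = Wstar * X := by
  have hrow (i : Fin d) : #{j | (i, j) ∈ A} = m := (card_filter_prodMk_mem A i).trans (hA i)
  have hsolve (i : Fin d) : ∃ v : Fin q → ℝ,
      (∀ j, (i, j) ∉ A → v j = What i j) ∧ v ᵥ* X = Wstar i ᵥ* X := by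
    let s := ({j | (i, j) ∈ A} : Finset (Fin q)).orderEmbOfFin (hrow i)
    obtain ⟨v, hfixed, hv⟩ :=
      exists_vecMul_eq_of_isUnit_submatrix s.injective (hX s s.injective) (What i)
        (Wstar i ᵥ* X)
    refine ⟨v, fun j hj => hfixed j ?_, hv⟩
    simpa [s, range_orderEmbOfFin] using hj
  choose W hfixed hW using hsolve
  exact ⟨Matrix.of W, hfixed, Matrix.ext fun i k => congrFun (hW i) k⟩
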